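/- Let u = ⌈n/2⌉, let I be any subset of {2,…,u}, and let c^I be the sequence obtained from c by swapping c_k and c_{n+2−k} for every k ∈ I. Then f(c^I) − f(c) = (2/n²)·( Σ_{m∈I} (n+2−2m)(c_{n+2−m} − c_m)·Σ_{k∉I, 2≤k<m} (k−1)(c_k − c_{n+2−k}) + Σ_{m∈I} (m−1)(c_{n+2−m} − c_m)·Σ_{k∉I, m<k≤u} (n+2−2k)(c_k − c_{n+2−k}) ). -/
import Mathlib


open Finset

/-- Partial sums of the sequence `c` (1-indexed): `partSum c k = c 1 + ⋯ + c k`. -/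
noncomputable def partSum (c : ℕ → ℝ) (k : ℕ) : ℝ := ∑ i ∈ Finset.Icc 1 k, c i

/-- The mean `S̄` of the partial sums `s_1, …, s_n`. -/
noncomputable def meanPS (n : ℕ) (c : ℕ → ℝ) : ℝ :=
  (1 / (n : ℝ)) * ∑ k ∈ Finset.Icc 1 n, partSum c k

/-- The variance `f(c)` of the partial sums `s_1, …, s_n`. -/
noncomputable def varPS (n : ℕ) (c : ℕ → ℝ) : ℝ :=
  (1 / (n : ℝ)) * ∑ k ∈ Finset.Icc 1 n, (partSum c k - meanPS n c) ^ 2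

/-- The `(i,j)`-partial mean `μ_{ij}(S) = (1/(j-i)) ∑_{k=i}^{j-1} s_k`. -/
noncomputable def partMean (c : ℕ → ℝ) (i j : ℕ) : ℝ :=
  (1 / ((j : ℝ) - (i : ℝ))) * ∑ k ∈ Finset.Icc i (j - 1), partSum c k

/-- The `(i,j)`-interchange of `c`: swap the entries in positions `i` and `j`. -/
noncomputable def swapSeq (c : ℕ → ℝ) (i j : ℕ) : ℕ → ℝ := fun k => c (Equiv.swap i j k)

/-- `c` is an arrangement (permutation) of `a` on the index range `1..n`. -/
def IsArrangement (n : ℕ) (a c : ℕ → ℝ) : Prop :=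
  ∃ σ : ℕ → ℕ, Set.BijOn σ (Set.Icc 1 n) (Set.Icc 1 n) ∧
    ∀ k ∈ Set.Icc 1 n, c k = a (σ k)

/-- The dual sequence `c^d = (c_1, c_n, c_{n-1}, …, c_2)`. -/
noncomputable def dualSeq (n : ℕ) (c : ℕ → ℝ) : ℕ → ℝ :=
  fun k => if 2 ≤ k then c (n + 2 - k) else c k

/-- Swap `c_k` and `c_{n+2-k}` simultaneously for every `k ∈ I` (where `I ⊆ {2,…,⌈n/2⌉}`,
so the swapped pairs are pairwise disjoint). -/
noncomputable def sumSwapN2 (n : ℕ) (I : Finset ℕ) (c : ℕ → ℝ) : ℕ → ℝ :=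
  fun k => if k ∈ I ∨ n + 2 - k ∈ I then c (n + 2 - k) else c k

noncomputable def dd (n : ℕ) (c : ℕ → ℝ) (m : ℕ) : ℝ := c (n + 2 - m) - c m
noncomputable def TT (n m k : ℕ) : ℝ := if m ≤ k ∧ k ≤ n + 1 - m then 1 else 0
noncomputable def gg (n m i : ℕ) : ℝ :=
  if i ≤ m then ((n:ℝ) + 2 - 2*m) * ((i:ℝ) - 1) else ((m:ℝ) - 1) * ((n:ℝ) + 2 - 2*i)

lemma mem_range' {n : ℕ} {I : Finset ℕ} (hI : I ⊆ Finset.Icc 2 ((n+1)/2)) {m : ℕ}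
    (hm : m ∈ I) : 2 ≤ m ∧ 2*m ≤ n+1 := by
  have := hI hm; simp only [mem_Icc] at this; omega

lemma sumSwap_sub (n : ℕ) (c : ℕ → ℝ) (I : Finset ℕ)
    (hI : I ⊆ Finset.Icc 2 ((n+1)/2)) (i : ℕ) (hi : i ∈ Finset.Icc 1 n) :
    sumSwapN2 n I c i - c i
      = ∑ m ∈ I, dd n c m * ((if i = m then (1:ℝ) else 0) - (if i = n + 2 - m then 1 else 0)) := by
  simp only [mem_Icc] at hi
  unfold sumSwapN2
  by_cases h1 : i ∈ I
  · obtain ⟨h2, h3⟩ := mem_range' hI h1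
    rw [if_pos (Or.inl h1), Finset.sum_eq_single i]
    · rw [if_pos rfl, if_neg (by omega)]; unfold dd; ring
    · intro m hm hne
      obtain ⟨hm2, hm3⟩ := mem_range' hI hm
      rw [if_neg (by omega), if_neg (by omega)]; ring
    · intro h; exact absurd h1 h
  · by_cases h2 : n + 2 - i ∈ I
    · obtain ⟨h3, h4⟩ := mem_range' hI h2
      rw [if_pos (Or.inr h2), Finset.sum_eq_single (n + 2 - i)]
      · rw [if_neg (by omega), if_pos (by omega)]; unfold dd
        have hiq : n + 2 - (n + 2 - i) = i := by omega
        rw [hiq]; ring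
      · intro m hm hne
        obtain ⟨hm2, hm3⟩ := mem_range' hI hm
        rw [if_neg (fun h => h1 (by rw [h]; exact hm)), if_neg (by omega)]; ring
      · intro h; exact absurd h2 h
    · rw [if_neg (by tauto), Finset.sum_eq_zero]; · ring
      intro m hm
      obtain ⟨hm2, hm3⟩ := mem_range' hI hm
      rw [if_neg (fun h => h1 (by rw [h]; exact hm)),
        if_neg (fun h => h2 (by have hh : n + 2 - i = m := (by omega); have h3 := hm; rwa [← hh] at h3))]
      ring

lemma partSum_sumSwap (n : ℕ) (c : ℕ → ℝ) (I : Finset ℕ)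
    (hI : I ⊆ Finset.Icc 2 ((n+1)/2)) (k : ℕ) (hk : k ∈ Finset.Icc 1 n) :
    partSum (sumSwapN2 n I c) k = partSum c k + ∑ m ∈ I, dd n c m * TT n m k := by
  simp only [mem_Icc] at hk
  unfold partSum
  have hpt : ∀ i ∈ Icc 1 k, sumSwapN2 n I c i
      = c i + ∑ m ∈ I, dd n c m *
        ((if i = m then (1:ℝ) else 0) - (if i = n + 2 - m then 1 else 0)) := by
    intro i hi
    simp only [mem_Icc] at hi
    have h := sumSwap_sub n c I hI i (by simp only [mem_Icc]; omega)
    linarith [h]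
  rw [Finset.sum_congr rfl hpt, Finset.sum_add_distrib]
  congr 1
  rw [Finset.sum_comm]
  apply Finset.sum_congr rfl
  intro m hm
  obtain ⟨hm2, hm3⟩ := mem_range' hI hm
  rw [← Finset.mul_sum]
  congr 1
  rw [Finset.sum_sub_distrib]
  simp only [Finset.sum_ite_eq' (Icc 1 k)]
  unfold TT
  simp only [mem_Icc]
  split_ifs <;> (try norm_num) <;> omega

lemma sum_TT (n m : ℕ) (hm2 : 2 ≤ m) (hm3 : 2*m ≤ n+1) :
    ∑ k ∈ Finset.Icc 1 n, TT n m k = (n:ℝ) + 2 - 2*m := by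
  unfold TT
  rw [← Finset.sum_filter]
  have hf : (Finset.Icc 1 n).filter (fun k => m ≤ k ∧ k ≤ n + 1 - m) = Finset.Icc m (n+1-m) := by
    ext k; simp only [mem_filter, mem_Icc]; omega
  rw [hf, Finset.sum_const, Nat.card_Icc]
  obtain ⟨a, ha⟩ : ∃ a, n + 1 = 2*m + a := ⟨n + 1 - 2*m, by omega⟩
  have h1 : n + 1 - m + 1 - m = a + 1 := by omega
  have h2 : (n:ℝ) = 2*m + a - 1 := by
    have := congrArg (Nat.cast (R := ℝ)) ha; push_cast at this; linarith
  rw [h1, h2]; push_cast; ring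

lemma TT_mul_TT (n m m' k : ℕ) (hm3 : 2*m ≤ n+1) (hm3' : 2*m' ≤ n+1) :
    TT n m k * TT n m' k = TT n (max m m') k := by
  unfold TT
  split_ifs <;> (try norm_num) <;> omega

lemma sum_TT_sq (n m m' : ℕ) (hm2 : 2 ≤ m) (hm3 : 2*m ≤ n+1) (hm2' : 2 ≤ m')
    (hm3' : 2*m' ≤ n+1) :
    ∑ k ∈ Finset.Icc 1 n, TT n m k * TT n m' k = (n:ℝ) + 2 - 2*(max m m' : ℕ) := by
  have h : ∀ k, TT n m k * TT n m' k = TT n (max m m') k := fun k => TT_mul_TT n m m' k hm3 hm3'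
  simp only [h]
  exact sum_TT n (max m m') (by omega) (by omega)

lemma sum_partSum (n : ℕ) (c : ℕ → ℝ) :
    ∑ k ∈ Finset.Icc 1 n, partSum c k = ∑ i ∈ Finset.Icc 1 n, ((n+1-i : ℕ) : ℝ) * c i := by
  unfold partSum
  have h : ∀ k ∈ Finset.Icc 1 n, ∑ i ∈ Finset.Icc 1 k, c i
      = ∑ i ∈ Finset.Icc 1 n, (if i ≤ k then c i else 0) := by
    intro k hk; simp only [mem_Icc] at hk
    rw [← Finset.sum_filter]
    congr 1; ext i; simp only [mem_filter, mem_Icc]; omega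
  rw [Finset.sum_congr rfl h, Finset.sum_comm]
  apply Finset.sum_congr rfl
  intro i hi; simp only [mem_Icc] at hi
  rw [← Finset.sum_filter]
  have hf : (Finset.Icc 1 n).filter (fun k => i ≤ k) = Finset.Icc i n := by
    ext k; simp only [mem_filter, mem_Icc]; omega
  rw [hf, Finset.sum_const, Nat.card_Icc, nsmul_eq_mul]

lemma sum_partSum_TT (n m : ℕ) (c : ℕ → ℝ) (hm2 : 2 ≤ m) (hm3 : 2*m ≤ n+1) :
    ∑ k ∈ Finset.Icc 1 n, partSum c k * TT n m k
      = ∑ i ∈ Finset.Icc 1 n, ((n+1-m+1 - max m i : ℕ) : ℝ) * c i := by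
  simp only [TT, mul_ite, mul_one, mul_zero]
  rw [← Finset.sum_filter]
  have hf : (Finset.Icc 1 n).filter (fun k => m ≤ k ∧ k ≤ n + 1 - m)
      = Finset.Icc m (n+1-m) := by
    ext k; simp only [mem_filter, mem_Icc]; omega
  rw [hf]
  unfold partSum
  have h : ∀ k ∈ Finset.Icc m (n+1-m), ∑ i ∈ Finset.Icc 1 k, c i
      = ∑ i ∈ Finset.Icc 1 n, (if i ≤ k then c i else 0) := by
    intro k hk; simp only [mem_Icc] at hk
    rw [← Finset.sum_filter]
    congr 1; ext i; simp only [mem_filter, mem_Icc]; omega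
  rw [Finset.sum_congr rfl h, Finset.sum_comm]
  apply Finset.sum_congr rfl
  intro i hi; simp only [mem_Icc] at hi
  rw [← Finset.sum_filter]
  have hf2 : (Finset.Icc m (n+1-m)).filter (fun k => i ≤ k)
      = Finset.Icc (max m i) (n+1-m) := by
    ext k; simp only [mem_filter, mem_Icc]; omega
  rw [hf2, Finset.sum_const, Nat.card_Icc, nsmul_eq_mul]

/-- the linear coefficient of `c i` in `n·P_m - (n+2-2m)·Σs` -/
noncomputable def HH (n m i : ℕ) : ℝ :=
  (n:ℝ) * ((n+1-m+1 - max m i : ℕ) : ℝ) - ((n:ℝ) + 2 - 2*m) * ((n+1-i : ℕ) : ℝ)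

lemma HH_eq_gg (n m i : ℕ) (hm2 : 2 ≤ m) (hm3 : 2*m ≤ n+1) (hi2 : 2 ≤ i)
    (hi3 : 2*i ≤ n+1) : HH n m i = gg n m i := by
  unfold HH gg
  rcases le_or_gt i m with h | h
  · rw [if_pos h]
    have e1 : n+1-m+1 - max m i = n+2 - 2*m := by omega
    rw [e1, Nat.cast_sub (by omega), Nat.cast_sub (by omega)]
    push_cast; ring
  · rw [if_neg (by omega)]
    have e1 : n+1-m+1 - max m i = n+2-m-i := by omega
    rw [e1, Nat.cast_sub (by omega), Nat.cast_sub (by omega), Nat.cast_sub (by omega)]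
    push_cast; ring

lemma HH_refl_eq_gg (n m i : ℕ) (hm2 : 2 ≤ m) (hm3 : 2*m ≤ n+1) (hi2 : 2 ≤ i)
    (hi3 : 2*i ≤ n+1) : HH n m (n+2-i) = -gg n m i := by
  unfold HH gg
  rcases le_or_gt i m with h | h
  · rw [if_pos h]
    have e1 : n+1-m+1 - max m (n+2-i) = 0 := by omega
    have e2 : n+1-(n+2-i) = i - 1 := by omega
    rw [e1, e2, Nat.cast_sub (by omega : 1 ≤ i)]
    push_cast; ring
  · rw [if_neg (by omega)]
    have e1 : n+1-m+1 - max m (n+2-i) = i - m := by omega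
    have e2 : n+1-(n+2-i) = i - 1 := by omega
    rw [e1, e2, Nat.cast_sub (by omega), Nat.cast_sub (by omega)]
    push_cast; ring

lemma HH_one (n m : ℕ) (hm2 : 2 ≤ m) (hm3 : 2*m ≤ n+1) : HH n m 1 = 0 := by
  unfold HH
  have e1 : n+1-m+1 - max m 1 = n+2-2*m := by omega
  have e2 : n+1-1 = n := by omega
  rw [e1, e2, Nat.cast_sub (by omega)]
  push_cast; ring

lemma HH_mid (n m i : ℕ) (hm2 : 2 ≤ m) (hm3 : 2*m ≤ n+1) (hi1 : (n+1)/2 < i)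
    (hi2 : i ≤ n+1-(n+1)/2) : HH n m i = 0 := by
  unfold HH
  have hev : n = 2*i - 2 := by omega
  have e1 : n+1-m+1 - max m i = i - m := by omega
  have e2 : n+1-i = i - 1 := by omega
  rw [e1, e2, Nat.cast_sub (by omega), Nat.cast_sub (by omega)]
  have e3 : (n:ℝ) = 2*i - 2 := by
    have := congrArg (Nat.cast (R := ℝ)) hev
    push_cast at this; rw [this]; push_cast [(by omega : 2 ≤ 2*i)]; ring
  rw [e3]; push_cast; ring

lemma sum_pair (n : ℕ) (hn : 2 ≤ n) (F : ℕ → ℝ) (h1 : F 1 = 0)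
    (hmid : ∀ i, (n+1)/2 < i → i ≤ n+1-(n+1)/2 → F i = 0) :
    ∑ i ∈ Finset.Icc 1 n, F i = ∑ i ∈ Finset.Icc 2 ((n+1)/2), (F i + F (n+2-i)) := by
  set u := (n+1)/2 with hu
  have hu1 : 1 ≤ u := by omega
  have hu2 : u ≤ n+1-u := by omega
  have hu3 : n+1-u ≤ n := by omega
  have e0 : Finset.Icc 1 n = Finset.Ioc 0 n := by ext k; simp [Nat.lt_iff_add_one_le]
  rw [e0]
  rw [← Finset.sum_Ioc_consecutive F (by omega : (0:ℕ) ≤ u) (by omega : u ≤ n)]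
  rw [← Finset.sum_Ioc_consecutive F (by omega : (0:ℕ) ≤ 1) (by omega : 1 ≤ u)]
  rw [← Finset.sum_Ioc_consecutive F hu2 hu3]
  have t1 : ∑ i ∈ Finset.Ioc 0 1, F i = 0 := by
    rw [show Finset.Ioc 0 1 = {1} from by ext k; simp; try omega]
    simpa using h1
  have t2 : ∑ i ∈ Finset.Ioc u (n+1-u), F i = 0 := by
    apply Finset.sum_eq_zero
    intro i hi; simp only [Finset.mem_Ioc] at hi
    exact hmid i hi.1 hi.2
  have t3 : ∑ i ∈ Finset.Ioc 1 u, F i = ∑ i ∈ Finset.Icc 2 u, F i := by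
    apply Finset.sum_congr _ (fun _ _ => rfl)
    ext k; simp only [Finset.mem_Ioc, Finset.mem_Icc]; omega
  have t4 : ∑ i ∈ Finset.Ioc (n+1-u) n, F i = ∑ i ∈ Finset.Icc 2 u, F (n+2-i) := by
    apply Finset.sum_nbij' (i := fun a => n+2-a) (j := fun a => n+2-a)
    · intro a ha; simp only [Finset.mem_Ioc] at ha; simp only [Finset.mem_Icc]; omega
    · intro a ha; simp only [Finset.mem_Icc] at ha; simp only [Finset.mem_Ioc]; omega
    · intro a ha; simp only [Finset.mem_Ioc] at ha; omega
    · intro a ha; simp only [Finset.mem_Icc] at ha; omega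
    · intro a ha; simp only [Finset.mem_Ioc] at ha
      congr 1; omega
  rw [t1, t2, t3, t4, Finset.sum_add_distrib]
  ring

lemma key_m (n m : ℕ) (c : ℕ → ℝ) (hn : 2 ≤ n) (hm2 : 2 ≤ m) (hm3 : 2*m ≤ n+1) :
    (n:ℝ) * (∑ k ∈ Finset.Icc 1 n, partSum c k * TT n m k)
      - ((n:ℝ)+2-2*m) * (∑ k ∈ Finset.Icc 1 n, partSum c k)
    = -∑ i ∈ Finset.Icc 2 ((n+1)/2), gg n m i * dd n c i := by
  rw [sum_partSum, sum_partSum_TT n m c hm2 hm3, Finset.mul_sum, Finset.mul_sum,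
    ← Finset.sum_sub_distrib]
  have hpt : ∀ i, (n:ℝ) * (((n+1-m+1-max m i : ℕ):ℝ) * c i)
      - ((n:ℝ)+2-2*m) * (((n+1-i : ℕ):ℝ) * c i) = HH n m i * c i := by
    intro i; unfold HH; ring
  simp only [hpt]
  rw [sum_pair n hn (fun i => HH n m i * c i)
    (by show HH n m 1 * c 1 = 0; rw [HH_one n m hm2 hm3]; ring)
    (fun i h1 h2 => by show HH n m i * c i = 0; rw [HH_mid n m i hm2 hm3 h1 h2]; ring)]
  rw [← Finset.sum_neg_distrib]
  apply Finset.sum_congr rfl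
  intro i hi; simp only [mem_Icc] at hi
  rw [HH_eq_gg n m i hm2 hm3 hi.1 (by omega), HH_refl_eq_gg n m i hm2 hm3 hi.1 (by omega)]
  unfold dd; ring

lemma quad_coef (n m m' : ℕ) (hm2 : 2 ≤ m) (hm3 : 2*m ≤ n+1) (hm2' : 2 ≤ m')
    (hm3' : 2*m' ≤ n+1) :
    (n:ℝ) * ((n:ℝ)+2-2*((max m m' : ℕ):ℝ)) - ((n:ℝ)+2-2*m)*((n:ℝ)+2-2*m')
      = 2 * gg n m m' := by
  unfold gg
  rcases le_or_gt m' m with h | h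
  · rw [if_pos h, max_eq_left h]; ring
  · rw [if_neg (by omega), max_eq_right (le_of_lt h)]; ring

lemma varPS_eq (n : ℕ) (hn : 2 ≤ n) (c : ℕ → ℝ) :
    varPS n c = (∑ k ∈ Finset.Icc 1 n, (partSum c k)^2) / n
      - ((∑ k ∈ Finset.Icc 1 n, partSum c k) / n)^2 := by
  unfold varPS meanPS
  have hn0 : (n:ℝ) ≠ 0 := Nat.cast_ne_zero.mpr (by omega)
  have expand : ∀ k ∈ Finset.Icc 1 n,
      (partSum c k - 1/(n:ℝ) * ∑ j ∈ Finset.Icc 1 n, partSum c j)^2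
      = (partSum c k)^2
        - (2*(1/(n:ℝ)) * ∑ j ∈ Finset.Icc 1 n, partSum c j) * partSum c k
        + (1/(n:ℝ) * ∑ j ∈ Finset.Icc 1 n, partSum c j)^2 := by
    intro k _; ring
  rw [Finset.sum_congr rfl expand, Finset.sum_add_distrib, Finset.sum_sub_distrib,
    Finset.sum_const, ← Finset.mul_sum, Nat.card_Icc]
  have hcard : n + 1 - 1 = n := by omega
  rw [hcard, nsmul_eq_mul]
  field_simp
  ring


/-- explicit value of the change of the objective after simultaneously
swapping `c_k` and `c_{n+2-k}` for all `k` in a set `I ⊆ {2,…,u}`, `u = ⌈n/2⌉`. -/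
theorem varPS_sumSwapN2_diff (n : ℕ) (hn : 2 ≤ n) (c : ℕ → ℝ) (I : Finset ℕ)
    (hI : I ⊆ Finset.Icc 2 ((n + 1) / 2)) :
    varPS n (sumSwapN2 n I c) - varPS n c =
      2 / (n : ℝ) ^ 2 *
        ((∑ m ∈ I, ((n : ℝ) + 2 - 2 * (m : ℝ)) * (c (n + 2 - m) - c m) *
            ∑ k ∈ Finset.Icc 2 (m - 1) \ I, ((k : ℝ) - 1) * (c k - c (n + 2 - k)))
          + ∑ m ∈ I, ((m : ℝ) - 1) * (c (n + 2 - m) - c m) *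
            ∑ k ∈ Finset.Icc (m + 1) ((n + 1) / 2) \ I,
              ((n : ℝ) + 2 - 2 * (k : ℝ)) * (c k - c (n + 2 - k))) := by
  have hn0 : (n:ℝ) ≠ 0 := Nat.cast_ne_zero.mpr (by omega)
  set c' := sumSwapN2 n I c with hc'
  set tf : ℕ → ℝ := fun k => ∑ m ∈ I, dd n c m * TT n m k with htf
  set S := ∑ k ∈ Finset.Icc 1 n, partSum c k with hS
  set Q := ∑ k ∈ Finset.Icc 1 n, (partSum c k)^2 with hQ
  set A := ∑ k ∈ Finset.Icc 1 n, partSum c k * tf k with hA0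
  set B2 := ∑ k ∈ Finset.Icc 1 n, (tf k)^2 with hB0
  set T := ∑ k ∈ Finset.Icc 1 n, tf k with hT0
  have hps : ∀ k ∈ Finset.Icc 1 n, partSum c' k = partSum c k + tf k :=
    fun k hk => partSum_sumSwap n c I hI k hk
  have hQ' : ∑ k ∈ Finset.Icc 1 n, (partSum c' k)^2 = Q + (2*A + B2) := by
    calc ∑ k ∈ Finset.Icc 1 n, (partSum c' k)^2
        = ∑ k ∈ Finset.Icc 1 n,
            ((partSum c k)^2 + (2*(partSum c k * tf k) + (tf k)^2)) :=
          Finset.sum_congr rfl (fun k hk => by rw [hps k hk]; ring)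
      _ = Q + (2*A + B2) := by
          rw [Finset.sum_add_distrib, Finset.sum_add_distrib, ← Finset.mul_sum, hQ, hA0, hB0]
  have hS' : ∑ k ∈ Finset.Icc 1 n, partSum c' k = S + T := by
    calc ∑ k ∈ Finset.Icc 1 n, partSum c' k
        = ∑ k ∈ Finset.Icc 1 n, (partSum c k + tf k) := Finset.sum_congr rfl hps
      _ = S + T := by rw [Finset.sum_add_distrib, hS, hT0]
  have hdiff : (n:ℝ)^2 * (varPS n c' - varPS n c)
      = 2*((n:ℝ)*A - S*T) + ((n:ℝ)*B2 - T^2) := by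
    rw [varPS_eq n hn c', varPS_eq n hn c, hQ', hS', ← hQ, ← hS]
    field_simp
    ring
  have hTval : T = ∑ m ∈ I, dd n c m * ((n:ℝ)+2-2*(m:ℝ)) := by
    rw [hT0]; simp only [htf]
    rw [Finset.sum_comm]
    refine Finset.sum_congr rfl fun m hm => ?_
    obtain ⟨h2, h3⟩ := mem_range' hI hm
    rw [← Finset.mul_sum, sum_TT n m h2 h3]
  have hAval : A = ∑ m ∈ I, dd n c m * (∑ k ∈ Finset.Icc 1 n, partSum c k * TT n m k) := by
    rw [hA0]; simp only [htf, Finset.mul_sum]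
    rw [Finset.sum_comm]
    refine Finset.sum_congr rfl fun m hm => ?_
    exact Finset.sum_congr rfl fun k hk => by ring
  have hBval : B2 = ∑ m ∈ I, ∑ m' ∈ I,
      dd n c m * dd n c m' * ((n:ℝ)+2-2*((max m m' : ℕ):ℝ)) := by
    rw [hB0]; simp only [htf]
    have hsq : ∀ k, (∑ m ∈ I, dd n c m * TT n m k)^2
        = ∑ m ∈ I, ∑ m' ∈ I, (dd n c m * dd n c m') * (TT n m k * TT n m' k) := by
      intro k; rw [sq, Finset.sum_mul_sum]
      exact Finset.sum_congr rfl fun m _ => Finset.sum_congr rfl fun m' _ => by ring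
    simp only [hsq]
    rw [Finset.sum_comm]
    refine Finset.sum_congr rfl fun m hm => ?_
    rw [Finset.sum_comm]
    refine Finset.sum_congr rfl fun m' hm' => ?_
    obtain ⟨h2, h3⟩ := mem_range' hI hm
    obtain ⟨h2', h3'⟩ := mem_range' hI hm'
    rw [← Finset.mul_sum, sum_TT_sq n m m' h2 h3 h2' h3']
  have key1 : (n:ℝ)*A - S*T
      = ∑ m ∈ I, dd n c m * (-(∑ i ∈ Finset.Icc 2 ((n+1)/2), gg n m i * dd n c i)) := by
    rw [hAval, hTval, Finset.mul_sum, Finset.mul_sum, ← Finset.sum_sub_distrib]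
    refine Finset.sum_congr rfl fun m hm => ?_
    obtain ⟨h2, h3⟩ := mem_range' hI hm
    have hk := key_m n m c hn h2 h3
    rw [hS]
    linear_combination dd n c m * hk
  have key2 : (n:ℝ)*B2 - T^2
      = ∑ m ∈ I, dd n c m * 2 * ∑ m' ∈ I, gg n m m' * dd n c m' := by
    rw [hBval, hTval, Finset.mul_sum, sq, Finset.sum_mul_sum, ← Finset.sum_sub_distrib]
    refine Finset.sum_congr rfl fun m hm => ?_
    obtain ⟨h2, h3⟩ := mem_range' hI hm
    rw [Finset.mul_sum, Finset.mul_sum, ← Finset.sum_sub_distrib]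
    refine Finset.sum_congr rfl fun m' hm' => ?_
    obtain ⟨h2', h3'⟩ := mem_range' hI hm'
    have hq := quad_coef n m m' h2 h3 h2' h3'
    linear_combination (dd n c m * dd n c m') * hq
  have hsplit : ∀ m ∈ I,
      (∑ i ∈ Finset.Icc 2 ((n+1)/2) \ I, gg n m i * dd n c i)
        + ∑ i ∈ I, gg n m i * dd n c i
      = ∑ i ∈ Finset.Icc 2 ((n+1)/2), gg n m i * dd n c i :=
    fun m _ => Finset.sum_sdiff hI
  have hmain : (n:ℝ)^2 * (varPS n c' - varPS n c)
      = ∑ m ∈ I, dd n c m * (-2 * ∑ i ∈ Finset.Icc 2 ((n+1)/2) \ I, gg n m i * dd n c i) := by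
    rw [hdiff, key1, key2, Finset.mul_sum, ← Finset.sum_add_distrib]
    refine Finset.sum_congr rfl fun m hm => ?_
    linear_combination (2 * dd n c m) * (hsplit m hm)
  rw [div_mul_eq_mul_div, eq_div_iff (by positivity : ((n:ℝ)^2) ≠ 0)]
  rw [show (varPS n c' - varPS n c) * (n:ℝ)^2 = (n:ℝ)^2 * (varPS n c' - varPS n c) from by ring,
    hmain, mul_add, Finset.mul_sum, Finset.mul_sum, ← Finset.sum_add_distrib]
  refine Finset.sum_congr rfl fun m hm => ?_
  obtain ⟨h2, h3⟩ := mem_range' hI hm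
  have hset : Finset.Icc 2 ((n+1)/2) \ I
      = (Finset.Icc 2 (m-1) \ I) ∪ (Finset.Icc (m+1) ((n+1)/2) \ I) := by
    ext i
    simp only [Finset.mem_sdiff, Finset.mem_union, Finset.mem_Icc]
    by_cases hiI : i ∈ I
    · simp [hiI]
    · simp only [hiI, not_false_iff, and_true]
      have hne : i ≠ m := fun h => hiI (by rw [h]; exact hm)
      omega
  have hdisj : Disjoint (Finset.Icc 2 (m-1) \ I) (Finset.Icc (m+1) ((n+1)/2) \ I) := by
    rw [Finset.disjoint_left]
    intro a ha hb
    simp only [Finset.mem_sdiff, Finset.mem_Icc] at ha hb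
    omega
  have e1 : ∑ k ∈ Finset.Icc 2 (m-1) \ I, gg n m k * dd n c k
      = -(((n:ℝ)+2-2*m) * ∑ k ∈ Finset.Icc 2 (m-1) \ I, ((k:ℝ)-1) * (c k - c (n+2-k))) := by
    rw [← neg_mul, Finset.mul_sum]
    refine Finset.sum_congr rfl fun k hk => ?_
    simp only [Finset.mem_sdiff, Finset.mem_Icc] at hk
    unfold gg dd
    rw [if_pos (by omega : k ≤ m)]
    ring
  have e2 : ∑ k ∈ Finset.Icc (m+1) ((n+1)/2) \ I, gg n m k * dd n c k
      = -(((m:ℝ)-1) * ∑ k ∈ Finset.Icc (m+1) ((n+1)/2) \ I,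
          ((n:ℝ)+2-2*(k:ℝ)) * (c k - c (n+2-k))) := by
    rw [← neg_mul, Finset.mul_sum]
    refine Finset.sum_congr rfl fun k hk => ?_
    simp only [Finset.mem_sdiff, Finset.mem_Icc] at hk
    unfold gg dd
    rw [if_neg (by omega : ¬ k ≤ m)]
    ring
  rw [hset, Finset.sum_union hdisj, e1, e2]
  unfold dd
  ring
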